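/- Let x ∈ (1,3]⁶ and suppose φ(x) < 0. Then −φ(x) < (3x₁² − 2x₁ − 5)/(x₁ + 1)², and (3x₁² − 2x₁ − 5)/(x₁ + 1)² ≤ 1 for all x₁ ∈ (1,3]; consequently φ(x) > −1. -/
import Mathlib


open Real

/-- The cosine of the dihedral angle at the edge `e₁` of a generalized hyper-ideal
tetrahedron whose edge lengths `lᵢ` satisfy `cosh lᵢ = xᵢ`. -/
noncomputable def phi (x1 x2 x3 x4 x5 x6 : ℝ) : ℝ :=
  (x2 * x3 + x5 * x6 + x1 * x2 * x5 + x1 * x3 * x6 - x1 ^ 2 * x4 + x4) /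
    (Real.sqrt (2 * x1 * x2 * x6 + x1 ^ 2 + x2 ^ 2 + x6 ^ 2 - 1) *
      Real.sqrt (2 * x1 * x3 * x5 + x1 ^ 2 + x3 ^ 2 + x5 ^ 2 - 1))

set_option maxHeartbeats 1600000 in
theorem phi_negative_part_bound (x1 x2 x3 x4 x5 x6 : ℝ)
    (h1 : 1 < x1) (h2 : 1 < x2) (h3 : 1 < x3) (h4 : 1 < x4) (h5 : 1 < x5) (h6 : 1 < x6)
    (h1' : x1 ≤ 3) (h2' : x2 ≤ 3) (h3' : x3 ≤ 3) (h4' : x4 ≤ 3) (h5' : x5 ≤ 3) (h6' : x6 ≤ 3)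
    (hneg : phi x1 x2 x3 x4 x5 x6 < 0) :
    -phi x1 x2 x3 x4 x5 x6 < (3 * x1 ^ 2 - 2 * x1 - 5) / (x1 + 1) ^ 2 ∧
      (∀ y : ℝ, 1 < y → y ≤ 3 → (3 * y ^ 2 - 2 * y - 5) / (y + 1) ^ 2 ≤ 1) ∧
      -1 < phi x1 x2 x3 x4 x5 x6 := by
  set A := 2 * x1 * x2 * x6 + x1 ^ 2 + x2 ^ 2 + x6 ^ 2 - 1 with hAdef
  set B := 2 * x1 * x3 * x5 + x1 ^ 2 + x3 ^ 2 + x5 ^ 2 - 1 with hBdef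
  set N := x2 * x3 + x5 * x6 + x1 * x2 * x5 + x1 * x3 * x6 - x1 ^ 2 * x4 + x4 with hNdef
  have hphi : phi x1 x2 x3 x4 x5 x6 = N / (Real.sqrt A * Real.sqrt B) := rfl
  clear_value A B N
  have hAlt : (x1 + 1) ^ 2 < A := by
    rw [hAdef]
    nlinarith [mul_pos (by linarith : (0:ℝ) < x1) (by nlinarith : (0:ℝ) < x2 * x6 - 1),
      sq_nonneg (x2 - 1), sq_nonneg (x6 - 1)]
  have hBlt : (x1 + 1) ^ 2 < B := by
    rw [hBdef]
    nlinarith [mul_pos (by linarith : (0:ℝ) < x1) (by nlinarith : (0:ℝ) < x3 * x5 - 1),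
      sq_nonneg (x3 - 1), sq_nonneg (x5 - 1)]
  have hx1 : (0:ℝ) < x1 + 1 := by linarith
  have hsA : x1 + 1 < Real.sqrt A := by
    rw [show x1 + 1 = Real.sqrt ((x1 + 1) ^ 2) from (Real.sqrt_sq hx1.le).symm]
    exact Real.sqrt_lt_sqrt (by positivity) hAlt
  have hsB : x1 + 1 < Real.sqrt B := by
    rw [show x1 + 1 = Real.sqrt ((x1 + 1) ^ 2) from (Real.sqrt_sq hx1.le).symm]
    exact Real.sqrt_lt_sqrt (by positivity) hBlt
  have hD : (x1 + 1) ^ 2 < Real.sqrt A * Real.sqrt B := by nlinarith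
  have hDpos : 0 < Real.sqrt A * Real.sqrt B := lt_trans (by positivity) hD
  rw [hphi] at hneg ⊢
  have hNneg : N < 0 := by
    rcases div_neg_iff.mp hneg with ⟨_, h⟩ | ⟨h, _⟩
    · exact absurd hDpos (not_lt.2 h.le)
    · exact h
  have hNbound : -N < 3 * x1 ^ 2 - 2 * x1 - 5 := by
    rw [hNdef]
    have e1 : x1 ^ 2 * x4 - x4 ≤ 3 * x1 ^ 2 - 3 := by
      nlinarith [mul_nonneg (by linarith : (0:ℝ) ≤ 3 - x4) (by nlinarith : (0:ℝ) ≤ x1 ^ 2 - 1)]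
    have e2 : 1 < x2 * x3 := by nlinarith
    have e3 : 1 < x5 * x6 := by nlinarith
    have e4 : x1 < x1 * x2 * x5 := by
      nlinarith [mul_pos (by linarith : (0:ℝ) < x1) (by nlinarith : (0:ℝ) < x2 * x5 - 1)]
    have e5 : x1 < x1 * x3 * x6 := by
      nlinarith [mul_pos (by linarith : (0:ℝ) < x1) (by nlinarith : (0:ℝ) < x3 * x6 - 1)]
    linarith
  have key : -(N / (Real.sqrt A * Real.sqrt B)) < (3 * x1 ^ 2 - 2 * x1 - 5) / (x1 + 1) ^ 2 := by
    rw [neg_div']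
    calc -N / (Real.sqrt A * Real.sqrt B) < -N / (x1 + 1) ^ 2 :=
          div_lt_div_of_pos_left (by linarith) (by positivity) hD
      _ < (3 * x1 ^ 2 - 2 * x1 - 5) / (x1 + 1) ^ 2 :=
          (div_lt_div_iff_of_pos_right (by positivity)).mpr hNbound
  have part2 : ∀ y : ℝ, 1 < y → y ≤ 3 → (3 * y ^ 2 - 2 * y - 5) / (y + 1) ^ 2 ≤ 1 := by
    intro y hy hy'
    rw [div_le_one (by positivity)]
    nlinarith
  refine ⟨key, part2, ?_⟩
  have := part2 x1 h1 h1'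
  linarith
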